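/- arXiv:math/0510079 — 3 statements merged into one kernel-verified Lean document; each statement's English description precedes it below -/
import Mathlib

section
/- Let s = 2, n ≥ 2, and let P = E^a N E^b N Q E^c be a valid path from (0,0) to (nr,2n) where a+b+c = r and E^c is the maximal run of E-steps at the end of P (i.e., the suffix after the last N-step of P is E^c). Then the path Q' = Q + (c,0) is valid and begins with at most r - b east steps. -/
/-!
Validity only constrains the factors `E w N` of a path: such a factor is forbidden exactly when
`w N` displaces by a multiple of `(r, s)` (`valid_iff_forall_eq_append`). Hence validity passes to
the factor `Q`, wherever it starts.

Suppose `Q` began with `t > r - b = a + c` east steps. If `t ≤ r`, one of the east steps of the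
run `E^b` of `P` and the north step ending the run `E^t` are exactly `(r, 2)` apart. If `t > r`,
the first `r + 1` east steps of `Q` enter a full period of classes at height `0`, and induction on
`ℓ` pushes every north step of `Q` entering height `2ℓ` beyond `ℓ • (r, 2) + (r + 1, 0)`; but the
last step of `Q` is a north step entering `(n - 1) • (r, 2)`.
-/

/-- The vector of a step: `true` is an east step `E=(1,0)`, `false` is a north step `N=(0,1)`. -/
def stepVec (b : Bool) : ℤ × ℤ := if b then (1, 0) else (0, 1)

/-- The point of the lattice path reached after the first `i` steps, starting at `start`. -/
def pathPoint (start : ℤ × ℤ) (steps : List Bool) (i : ℕ) : ℤ × ℤ :=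
  start + ((steps.take i).map stepVec).sum

/-- The path with step list `steps` starting at `start` ends at `fin`. -/
def IsPathFrom (start fin : ℤ × ℤ) (steps : List Bool) : Prop :=
  pathPoint start steps steps.length = fin

/-- Validity of a lattice path with respect to the equivalence `v ~ v + ℓ(r,s)`:
whenever the path enters a point `v` with an `E`-step, every later point of the path
in the class of `v` is also entered with an `E`-step. -/
def Valid (r s : ℤ) (start : ℤ × ℤ) (steps : List Bool) : Prop :=
  ∀ i j, i < j → ∀ (hi : i < steps.length) (hj : j < steps.length),
    (∃ ℓ : ℤ, pathPoint start steps (j + 1) - pathPoint start steps (i + 1) = (ℓ * r, ℓ * s)) →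
    steps.get ⟨i, hi⟩ = true → steps.get ⟨j, hj⟩ = true

open List

theorem sum_map_stepVec (l : List Bool) :
    (l.map stepVec).sum = ((l.count true : ℤ), (l.count false : ℤ)) := by
  induction l with
  | nil => rfl
  | cons b l ih => cases b <;> simp [stepVec, ih, Prod.ext_iff] <;> ring

theorem pathPoint_eq (st : ℤ × ℤ) (l : List Bool) (i : ℕ) :
    pathPoint st l i = st + (((l.take i).count true : ℤ), ((l.take i).count false : ℤ)) := by
  rw [pathPoint, sum_map_stepVec]

theorem pathPoint_sub_pathPoint (st : ℤ × ℤ) (u w v : List Bool) :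
    pathPoint st (u ++ true :: (w ++ false :: v)) (u.length + 1 + w.length + 1) -
        pathPoint st (u ++ true :: (w ++ false :: v)) (u.length + 1) =
      ((w.count true : ℤ), (w.count false : ℤ) + 1) := by
  have hl : u ++ true :: (w ++ false :: v) = (u ++ [true]) ++ ((w ++ [false]) ++ v) := by simp
  have h₁ : (u ++ true :: (w ++ false :: v)).take (u.length + 1) = u ++ [true] := by
    rw [hl]; exact take_left' (by simp)
  have h₂ : (u ++ true :: (w ++ false :: v)).take (u.length + 1 + w.length + 1) =
      (u ++ [true]) ++ (w ++ [false]) := by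
    rw [hl, ← append_assoc]; exact take_left' (by simp; omega)
  simp only [pathPoint_eq, h₁, h₂, count_append, Prod.ext_iff]
  simp

theorem valid_iff_forall_eq_append {r s : ℤ} {st : ℤ × ℤ} {l : List Bool} :
    Valid r s st l ↔ ∀ u w v, l = u ++ true :: (w ++ false :: v) →
      ∀ ℓ : ℤ, (w.count true : ℤ) = ℓ * r → (w.count false : ℤ) + 1 ≠ ℓ * s := by
  constructor
  · rintro hl u w v rfl ℓ hE hN
    have := hl u.length (u.length + 1 + w.length) (by omega) (by simp) (by simp; omega)
      ⟨ℓ, by rw [pathPoint_sub_pathPoint, hE, hN]⟩ (by simp)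
    simp only [get_eq_getElem] at this
    rw [getElem_append_right (by omega)] at this
    simp [show u.length + 1 + w.length - u.length = w.length + 1 by omega] at this
  · intro h i j hij hi hj ⟨ℓ, hℓ⟩ hti
    by_contra htj
    simp only [get_eq_getElem, Bool.not_eq_true] at hti htj
    obtain ⟨u, w, v, rfl, rfl, hw⟩ : ∃ u w v, l = u ++ true :: (w ++ false :: v) ∧
        u.length = i ∧ w.length = j - i - 1 := by
      refine ⟨l.take i, (l.drop (i + 1)).take (j - i - 1), l.drop (j + 1), ?_,
        by simp; omega, by simp; omega⟩
      conv_lhs => rw [← take_append_drop i l, drop_eq_getElem_cons hi, hti,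
        ← take_append_drop (j - i - 1) (l.drop (i + 1)), drop_drop,
        show i + 1 + (j - i - 1) = j by omega, drop_eq_getElem_cons hj, htj]
    rw [show j + 1 = u.length + 1 + w.length + 1 by omega, pathPoint_sub_pathPoint,
      Prod.ext_iff] at hℓ
    exact h u w v rfl ℓ hℓ.1 hℓ.2

theorem Valid.of_isInfix {r s : ℤ} {st st' : ℤ × ℤ} {l l' : List Bool}
    (hv : Valid r s st l') (h : l <:+: l') : Valid r s st' l := by
  obtain ⟨p, q, rfl⟩ := h
  rw [valid_iff_forall_eq_append] at hv ⊢
  rintro u w v rfl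
  exact hv (p ++ u) w (v ++ q) (by simp)

theorem List.exists_eq_append_cons_count_eq {α : Type*} [BEq α] [LawfulBEq α] {a : α} :
    ∀ {l : List α} {k : ℕ}, k < l.count a → ∃ l₁ l₂, l = l₁ ++ a :: l₂ ∧ l₁.count a = k
  | [], k, hk => by simp at hk
  | x :: l, k, hk => by
    by_cases hx : x = a
    · subst hx
      rcases k with _ | k
      · exact ⟨[], l, rfl, rfl⟩
      · obtain ⟨l₁, l₂, rfl, hl₁⟩ := exists_eq_append_cons_count_eq (l := l) (k := k)
          (by simp at hk; omega)
        exact ⟨x :: l₁, l₂, rfl, by simp [hl₁]⟩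
    · obtain ⟨l₁, l₂, rfl, hl₁⟩ := exists_eq_append_cons_count_eq (l := l) (k := k)
        (by simpa [count_cons, hx] using hk)
      exact ⟨x :: l₁, l₂, rfl, by simp [hx, hl₁]⟩

theorem List.exists_eq_replicate_takeWhile_append :
    ∀ l : List Bool, ∃ D, l = replicate (l.takeWhile (fun x => x = true)).length true ++ D ∧
      D.head? ≠ some true
  | [] => ⟨[], rfl, by simp⟩
  | false :: l => ⟨false :: l, by simp, by simp⟩
  | true :: l => by
    obtain ⟨D, hl, hD⟩ := exists_eq_replicate_takeWhile_append l
    exact ⟨D, by simpa [replicate_succ] using hl, hD⟩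

theorem Valid.mul_lt_count_true {r s : ℕ} {st : ℤ × ℤ} {w v : List Bool} {ℓ : ℕ}
    (hv : Valid r s st (replicate (r + 1) true ++ w ++ false :: v)) (hℓ : 0 < ℓ)
    (hN : w.count false + 1 = ℓ * s) : ℓ * r < w.count true := by
  induction ℓ generalizing w v with
  | zero => omega
  | succ ℓ ih =>
    rw [Nat.succ_mul] at hN
    have hlow : ℓ * r ≤ w.count true := by
      rcases Nat.eq_zero_or_pos ℓ with rfl | hℓ
      · simp
      have hs : 0 < s := Nat.pos_of_ne_zero (by rintro rfl; omega)
      have := Nat.mul_pos hℓ hs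
      obtain ⟨w₁, w₂, rfl, hw₁⟩ :=
        exists_eq_append_cons_count_eq (a := false) (l := w) (k := ℓ * s - 1) (by omega)
      have := ih (w := w₁) (v := w₂ ++ false :: v) (by simpa using hv) hℓ (by omega)
      simp only [count_append]
      omega
    by_contra! hle
    rw [Nat.succ_mul] at hle
    set e := ℓ * r + r - w.count true with he
    have hE : (replicate e true ++ w).count true = (ℓ + 1) * r := by
      simp [Nat.succ_mul]; omega
    have hN' : (replicate e true ++ w).count false + 1 = (ℓ + 1) * s := by
      simp [count_replicate, Nat.succ_mul]; omega
    refine valid_iff_forall_eq_append.mp hv (replicate (r - e) true) (replicate e true ++ w) v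
      ?_ (ℓ + 1) (by exact_mod_cast hE) (by exact_mod_cast hN')
    rw [show r + 1 = r - e + 1 + e by omega, replicate_add, replicate_succ']
    simp

theorem not_valid_replicate_append {r s m : ℕ} {st : ℤ × ℤ} {w : List Bool} (hm : 0 < m)
    (hw : w.getLast? = some false) (hE : (replicate (r + 1) true ++ w).count true = m * r)
    (hN : (replicate (r + 1) true ++ w).count false = m * s) :
    ¬ Valid r s st (replicate (r + 1) true ++ w) := by
  rw [← dropLast_append_getLast? false hw, ← append_assoc] at hE hN ⊢
  intro hv
  have := hv.mul_lt_count_true (v := []) hm (by simpa [count_replicate] using hN)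
  simp at hE
  omega

theorem not_valid_two_of_lt_add {r j t : ℕ} {st : ℤ × ℤ} {p q : List Bool} (ht : t ≤ r)
    (hjt : r < j + t) :
    ¬ Valid r 2 st (p ++ replicate j true ++ false :: (replicate t true ++ false :: q)) := by
  rw [valid_iff_forall_eq_append]
  intro hv
  refine hv (p ++ replicate (j - (r - t) - 1) true) (replicate (r - t) true ++ false ::
    replicate t true) q ?_ 1 ?_ ?_
  · rw [show j = j - (r - t) - 1 + 1 + (r - t) by omega, replicate_add, replicate_succ']
    simp
  · simp; omega
  · simp [count_replicate]

theorem case_one_image_valid_general (r n : ℕ) (hn : 2 ≤ n)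
    (a b c : ℕ) (Q : List Bool) (steps : List Bool)
    (hform : steps = List.replicate a true ++ [false] ++ List.replicate b true ++ [false] ++
      Q ++ List.replicate c true)
    (habc : a + b + c = r)
    (hlast : Q = [] ∨ Q.getLast? = some false)
    (hpath : IsPathFrom (0, 0) ((n * r : ℤ), (2 * n : ℤ)) steps)
    (hvalid : Valid r 2 (0, 0) steps) :
    Valid r 2 ((r : ℤ), 2) Q ∧ (Q.takeWhile (fun x => x = true)).length ≤ r - b := by
  obtain ⟨m, rfl⟩ : ∃ m, n = m + 1 := ⟨n - 1, by omega⟩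
  have hcount : Q.count true = m * r ∧ Q.count false = m * 2 := by
    rw [IsPathFrom, pathPoint_eq, take_length, hform] at hpath
    simp [Prod.ext_iff, count_replicate] at hpath
    constructor <;> push_cast [add_mul] at hpath <;> omega
  have hQv : Valid r 2 ((r : ℤ), 2) Q := hvalid.of_isInfix ⟨_, replicate c true, hform.symm⟩
  refine ⟨hQv, ?_⟩
  obtain ⟨D, hQ, hD⟩ := exists_eq_replicate_takeWhile_append Q
  set t := (Q.takeWhile (fun x => x = true)).length
  obtain ⟨D, rfl⟩ : ∃ D', D = false :: D' := by
    rcases D with _ | ⟨_ | _, D⟩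
    · rw [hQ] at hcount; simp [count_replicate] at hcount; omega
    · exact ⟨D, rfl⟩
    · simp at hD
  by_contra! hbt
  rcases le_or_gt t r with htr | hrt
  · refine not_valid_two_of_lt_add (st := (0, 0)) (j := b) (p := replicate a true ++ [false])
      (q := D ++ replicate c true) htr (by omega) ?_
    rw [hform, hQ] at hvalid
    simpa using hvalid
  · have hQ' : Q = replicate (r + 1) true ++ (replicate (t - (r + 1)) true ++ false :: D) := by
      rw [hQ, ← append_assoc, ← replicate_add, Nat.add_sub_cancel' hrt]
    rw [hQ'] at hQv hcount hlast
    refine not_valid_replicate_append (by omega) ?_ hcount.1 hcount.2 hQv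
    simpa [getLast?_append] using hlast

/-- case (1) of the bijection. If `P = E^a N E^b N Q E^c` is a valid path from
`(0,0)` to `(nr,2n)` with `a+b+c = r` and `E^c` the maximal terminal run of `E`-steps, then
`Q' = Q + (c,0)` (the path `Q` started at `(r,2)`) is valid and begins with at most `r - b`
east steps. -/
theorem case_one_image_valid (r n : ℕ) (hr : 0 < r) (hn : 2 ≤ n)
    (a b c : ℕ) (Q : List Bool) (steps : List Bool)
    (hform : steps = List.replicate a true ++ [false] ++ List.replicate b true ++ [false] ++
      Q ++ List.replicate c true)
    (habc : a + b + c = r)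
    (hlast : Q = [] ∨ Q.getLast? = some false)
    (hpath : IsPathFrom (0, 0) ((n * r : ℤ), (2 * n : ℤ)) steps)
    (hvalid : Valid r 2 (0, 0) steps) :
    Valid r 2 ((r : ℤ), 2) Q ∧ (Q.takeWhile (fun x => x = true)).length ≤ r - b :=
  case_one_image_valid_general r n hn a b c Q steps hform habc hlast hpath hvalid
end

section
/- Let s = 2, n ≥ 2, and let P = E^a N E^b N R E^{r+1} N E^c be a valid path from (0,0) to (nr, 2n) with a + b + c < r (where E^a N E^b N is the prefix up to the second N-step and N E^c ends the path). Then the path Q' = E^{a+b+c+1} N R' from (r,2) to (nr,2n), where R' = R + (c+r+1, 1), is valid. -/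
section PathPoint

@[simp]
lemma pathPoint_zero (st : ℤ × ℤ) (l : List Bool) : pathPoint st l 0 = st := by
  simp [pathPoint]

lemma pathPoint_length (st : ℤ × ℤ) (l : List Bool) :
    pathPoint st l l.length = st + (l.map stepVec).sum := by
  simp [pathPoint]

lemma pathPoint_succ (st : ℤ × ℤ) {l : List Bool} {t : ℕ} (ht : t < l.length) :
    pathPoint st l (t + 1) = pathPoint st l t + stepVec l[t] := by
  rw [pathPoint, pathPoint, List.take_add_one, List.getElem?_eq_getElem ht, List.map_append,
    List.sum_append, add_assoc]
  simp

lemma pathPoint_add_start (st w : ℤ × ℤ) (l : List Bool) (t : ℕ) :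
    pathPoint (st + w) l t = pathPoint st l t + w :=
  add_right_comm _ _ _

lemma pathPoint_append_of_le (st : ℤ × ℤ) {l₁ : List Bool} (l₂ : List Bool) {t : ℕ}
    (ht : t ≤ l₁.length) : pathPoint st (l₁ ++ l₂) t = pathPoint st l₁ t := by
  simp [pathPoint, List.take_append_of_le_length ht]

lemma pathPoint_append_length_add (st : ℤ × ℤ) (l₁ l₂ : List Bool) (t : ℕ) :
    pathPoint st (l₁ ++ l₂) (l₁.length + t) = pathPoint (pathPoint st l₁ l₁.length) l₂ t := by
  simp [pathPoint, List.take_append, List.take_of_length_le, add_assoc]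

lemma pathPoint_replicate_true (st : ℤ × ℤ) {m t : ℕ} (ht : t ≤ m) :
    pathPoint st (List.replicate m true) t = st + ((t : ℤ), 0) := by
  simp [pathPoint, List.take_replicate, min_eq_left ht, stepVec]

lemma pathPoint_replicate_true_append_false (st : ℤ × ℤ) (m : ℕ) {t : ℕ} (ht : t ≤ m) :
    pathPoint st (List.replicate m true ++ [false]) t = st + ((t : ℤ), 0) := by
  rw [pathPoint_append_of_le _ _ (by simpa using ht), pathPoint_replicate_true _ ht]

lemma pathPoint_replicate_true_append_false_length (st : ℤ × ℤ) (m : ℕ) :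
    pathPoint st (List.replicate m true ++ [false]) (m + 1) = st + ((m : ℤ), 1) := by
  simpa [stepVec] using pathPoint_length st (List.replicate m true ++ [false])

end PathPoint

section Valid

variable {r s : ℤ}

lemma valid_append_iff {st : ℤ × ℤ} {l₁ l₂ : List Bool} :
    Valid r s st (l₁ ++ l₂) ↔ Valid r s st l₁ ∧ Valid r s (pathPoint st l₁ l₁.length) l₂ ∧
      ∀ i j (hi : i < l₁.length) (hj : j < l₂.length),
        (∃ ℓ : ℤ, pathPoint (pathPoint st l₁ l₁.length) l₂ (j + 1) - pathPoint st l₁ (i + 1) =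
          (ℓ * r, ℓ * s)) → l₁[i] = true → l₂[j] = true := by
  have left : ∀ i (hi : i < l₁.length), (l₁ ++ l₂)[i]'(by simp; omega) = l₁[i] ∧
      pathPoint st (l₁ ++ l₂) (i + 1) = pathPoint st l₁ (i + 1) := fun i hi =>
    ⟨List.getElem_append_left hi, pathPoint_append_of_le _ _ hi⟩
  have right : ∀ j (hj : j < l₂.length), (l₁ ++ l₂)[l₁.length + j]'(by simp; omega) = l₂[j] ∧
      pathPoint st (l₁ ++ l₂) (l₁.length + j + 1) =
        pathPoint (pathPoint st l₁ l₁.length) l₂ (j + 1) := fun j hj =>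
    ⟨by simp, pathPoint_append_length_add _ _ _ (j + 1)⟩
  simp only [Valid, List.get_eq_getElem]
  constructor
  · intro h
    refine ⟨fun i j hij hi hj hcl hE => ?_, fun i j hij hi hj hcl hE => ?_,
      fun i j hi hj hcl hE => ?_⟩
    · have := h i j hij (by simp; omega) (by simp; omega)
      rw [(left i hi).1, (left j hj).1, (left i hi).2, (left j hj).2] at this
      exact this hcl hE
    · have := h (l₁.length + i) (l₁.length + j) (by omega) (by simp; omega) (by simp; omega)
      rw [(right i hi).1, (right j hj).1, (right i hi).2, (right j hj).2] at this
      exact this hcl hE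
    · have := h i (l₁.length + j) (by omega) (by simp; omega) (by simp; omega)
      rw [(left i hi).1, (right j hj).1, (left i hi).2, (right j hj).2] at this
      exact this hcl hE
  · rintro ⟨h₁, h₂, hcross⟩ i j hij hi hj hcl hE
    rcases lt_or_ge j l₁.length with hj₁ | hj₁
    · rw [(left j hj₁).1]
      rw [(left i (by omega)).2, (left j hj₁).2] at hcl
      rw [(left i (by omega)).1] at hE
      exact h₁ i j hij (by omega) hj₁ hcl hE
    obtain ⟨j, rfl⟩ := Nat.exists_eq_add_of_le hj₁
    have hj₂ : j < l₂.length := by simp at hj; omega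
    rw [(right j hj₂).1]
    rw [(right j hj₂).2] at hcl
    rcases lt_or_ge i l₁.length with hi₁ | hi₁
    · rw [(left i hi₁).2] at hcl
      rw [(left i hi₁).1] at hE
      exact hcross i j hi₁ hj₂ hcl hE
    obtain ⟨i, rfl⟩ := Nat.exists_eq_add_of_le hi₁
    rw [(right i (by omega)).2] at hcl
    rw [(right i (by omega)).1] at hE
    exact h₂ i j (by omega) (by omega) hj₂ hcl hE

lemma valid_add_start_iff {st w : ℤ × ℤ} {l : List Bool} :
    Valid r s (st + w) l ↔ Valid r s st l := by
  simp only [Valid, pathPoint_add_start, add_sub_add_right_eq_sub]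

lemma valid_replicate_true (st : ℤ × ℤ) (m : ℕ) : Valid r s st (List.replicate m true) := by
  intro i j _ _ _ _ _
  simp

lemma valid_replicate_true_append_false (st : ℤ × ℤ) (m : ℕ) :
    Valid r 2 st (List.replicate m true ++ [false]) := by
  intro i j _ _ hj ⟨ℓ, hℓ⟩ _
  simp only [List.length_append, List.length_replicate, List.length_singleton] at hj
  rcases Nat.lt_succ_iff_lt_or_eq.mp hj with hjm | rfl
  · simp [List.getElem_append_left, hjm]
  · rw [pathPoint_replicate_true_append_false_length,
      pathPoint_replicate_true_append_false _ _ (by omega)] at hℓ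
    have hy := congrArg Prod.snd hℓ
    simp at hy
    omega

end Valid

lemma fst_pathPoint_lt_of_barrier {f : ℤ → ℤ} (hf : ∀ y, f y ≤ f (y + 1)) {st : ℤ × ℤ}
    {l : List Bool} {T : ℕ} (hT : T ≤ l.length) (h₀ : st.1 < f st.2)
    (hE : ∀ t (ht : t < T), l[t] = true →
      (pathPoint st l (t + 1)).1 ≠ f (pathPoint st l (t + 1)).2) :
    ∀ t ≤ T, (pathPoint st l t).1 < f (pathPoint st l t).2 := by
  intro t ht
  induction t with
  | zero => simpa using h₀
  | succ t ih =>
    have hlt := ih (by omega)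
    have hne := hE t (by omega)
    rw [pathPoint_succ st (by omega)] at hne ⊢
    cases hb : l[t]
    · simpa [stepVec] using hlt.trans_le (hf _)
    · simp only [hb, stepVec, if_true, Prod.fst_add, Prod.snd_add, add_zero,
        forall_const] at hne ⊢
      omega

/-- The staircase of the two classes of `(α, 0)` and `(α + i, 1)` modulo `(r, 2)`:
its graph is their union. -/
def staircase (r α i y : ℤ) : ℤ := α + y / 2 * r + y % 2 * i

section Staircase

variable {r α i : ℤ}

lemma staircase_le_succ (hi : 0 ≤ i) (hir : i ≤ r) (y : ℤ) :
    staircase r α i y ≤ staircase r α i (y + 1) := by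
  obtain ⟨k, rfl | rfl⟩ := Int.even_or_odd' y
  · rw [staircase, staircase, show 2 * k / 2 = k by omega, show 2 * k % 2 = 0 by omega,
      show (2 * k + 1) / 2 = k by omega, show (2 * k + 1) % 2 = 1 by omega]
    linarith
  · rw [staircase, staircase, show (2 * k + 1) / 2 = k by omega,
      show (2 * k + 1) % 2 = 1 by omega, show (2 * k + 1 + 1) / 2 = k + 1 by omega,
      show (2 * k + 1 + 1) % 2 = 0 by omega]
    linarith

lemma staircase_two : staircase r α i 2 = α + r := by
  simp [staircase]

lemma staircase_two_mul_add_one (k : ℤ) : staircase r α i (2 * k + 1) = α + i + k * r := by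
  rw [staircase, show (2 * k + 1) / 2 = k by omega, show (2 * k + 1) % 2 = 1 by omega]
  ring

lemma fst_eq_staircase_iff {p : ℤ × ℤ} : p.1 = staircase r α i p.2 ↔
    (∃ k, p = (α + k * r, 2 * k)) ∨ ∃ k, p = (α + i + k * r, 2 * k + 1) := by
  obtain ⟨x, y⟩ := p
  obtain ⟨k, rfl | rfl⟩ := Int.even_or_odd' y
  · rw [staircase, show 2 * k / 2 = k by omega, show 2 * k % 2 = 0 by omega]
    constructor
    · rintro rfl; exact .inl ⟨k, by simp⟩
    · rintro (⟨k', h⟩ | ⟨k', h⟩) <;> simp only [Prod.mk.injEq] at h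
      · obtain ⟨rfl, hk⟩ := h; obtain rfl : k = k' := by omega
        simp
      · omega
  · rw [staircase_two_mul_add_one]
    constructor
    · rintro rfl; exact .inr ⟨k, rfl⟩
    · rintro (⟨k', h⟩ | ⟨k', h⟩) <;> simp only [Prod.mk.injEq] at h
      · omega
      · obtain ⟨rfl, hk⟩ := h; obtain rfl : k = k' := by omega
        rfl

end Staircase

/-- Before step `J`, validity keeps the `E`-steps off the class of `(α + i, 1)` and `hA` keeps
them off the class of `(α, 0)`, so up to step `J` the path stays strictly left of the staircase. -/
lemma Valid.getElem_eq_true_of_odd_staircase {r α i : ℤ} {st : ℤ × ℤ} {l : List Bool}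
    (hl : Valid r 2 st l) (hi : 0 ≤ i) (hir : i ≤ r) (hst : st.1 < staircase r α i st.2)
    (hA : ∀ t (ht : t < l.length), l[t] = true → ∀ k : ℤ,
      pathPoint st l (t + 1) ≠ (α + k * r, 2 * k))
    {J : ℕ} (hJ : J < l.length) {ℓ : ℤ}
    (hJpt : pathPoint st l (J + 1) = (α + i + ℓ * r, 2 * ℓ + 1)) : l[J] = true := by
  by_contra hN
  have hbelow := fst_pathPoint_lt_of_barrier (staircase_le_succ hi hir) hJ.nat_succ_le hst
    (fun t ht hE heq => ?_) (J + 1) le_rfl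
  · rw [hJpt, staircase_two_mul_add_one] at hbelow
    exact hbelow.false
  have htJ : t < J := lt_of_le_of_ne (by omega) (by rintro rfl; exact hN hE)
  rcases fst_eq_staircase_iff.mp heq with ⟨k, hk⟩ | ⟨k, hk⟩
  · exact hA t (by omega) hE k hk
  · refine hN (hl t J htJ _ hJ ⟨ℓ - k, ?_⟩ hE)
    rw [hJpt, hk]
    simp only [Prod.mk_sub_mk, Prod.mk.injEq]
    constructor <;> ring

/-- After the shift, the `E`-step of `E^m` entering `(q.1 + i + 1, q.2)` is equivalent to the
points of `R` in the class of `(x + 1 - m + i, 1)`. -/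
lemma valid_replicate_true_append_false_append {r : ℤ} {m : ℕ} (hm : (m : ℤ) ≤ r)
    (q : ℤ × ℤ) {x : ℤ} {R : List Bool} (hR : Valid r 2 (x, 2) R)
    (hA : ∀ t (ht : t < R.length), R[t] = true → ∀ k : ℤ,
      pathPoint (x, 2) R (t + 1) ≠ (x + 1 - m + k * r, 2 * k)) :
    Valid r 2 q (List.replicate m true ++ [false] ++ R) := by
  have hshift : pathPoint q (List.replicate m true ++ [false]) (m + 1) =
      (x, 2) + (q.1 + m - x, q.2 - 1) := by
    rw [pathPoint_replicate_true_append_false_length]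
    ext <;> simp only [Prod.fst_add, Prod.snd_add] <;> ring
  refine valid_append_iff.mpr ⟨valid_replicate_true_append_false q m, ?_,
    fun i j hi hj ⟨ℓ, hℓ⟩ hE => ?_⟩
  · rwa [show (List.replicate m true ++ [false]).length = m + 1 by simp, hshift,
      valid_add_start_iff]
  simp only [List.length_append, List.length_replicate, List.length_singleton] at hi hj hℓ
  have him : i < m := by
    by_contra him
    obtain rfl : i = m := by omega
    simp at hE
  rw [hshift, pathPoint_add_start, pathPoint_replicate_true_append_false _ _ him] at hℓ
  refine hR.getElem_eq_true_of_odd_staircase (α := x + 1 - m) (i := i) (ℓ := ℓ) (by omega)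
    (by omega) (by rw [staircase_two]; omega) hA hj ?_
  simp only [Prod.ext_iff, Prod.fst_add, Prod.fst_sub, Prod.snd_add, Prod.snd_sub] at hℓ ⊢
  push_cast at hℓ
  constructor <;> linarith [hℓ.1, hℓ.2]

theorem case_two_image_valid_general (r n : ℕ)
    (a b c : ℕ) (R : List Bool) (steps : List Bool)
    (hform : steps = List.replicate a true ++ [false] ++ List.replicate b true ++ [false] ++
      R ++ List.replicate (r + 1) true ++ [false] ++ List.replicate c true)
    (habc : a + b + c < r)
    (hpath : IsPathFrom (0, 0) ((n * r : ℤ), (2 * n : ℤ)) steps)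
    (hvalid : Valid r 2 (0, 0) steps) :
    Valid r 2 ((r : ℤ), 2) (List.replicate (a + b + c + 1) true ++ [false] ++ R) ∧
    IsPathFrom ((r : ℤ), 2) ((n * r : ℤ), (2 * n : ℤ))
      (List.replicate (a + b + c + 1) true ++ [false] ++ R) := by
  set pre := List.replicate a true ++ [false] ++ List.replicate b true ++ [false]
  set tail := List.replicate (r + 1) true ++ [false] ++ List.replicate c true
  have hsplit : steps = pre ++ (R ++ tail) := by simp [hform, pre, tail]
  have hpre : pathPoint (0, 0) pre pre.length = ((a + b : ℤ), 2) := by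
    rw [pathPoint_length]
    simp [pre, stepVec]
  have hRsum : (R.map stepVec).sum = ((n * r - r - 1 - c - a - b : ℤ), (2 * n - 3 : ℤ)) := by
    rw [IsPathFrom, hsplit, pathPoint_length] at hpath
    simp [pre, tail, stepVec, Prod.ext_iff] at hpath
    ext <;> linarith [hpath.1, hpath.2]
  rw [hsplit, valid_append_iff, hpre] at hvalid
  obtain ⟨hR, -, hcross⟩ := valid_append_iff.mp hvalid.2.1
  -- no `E`-step of `R` is equivalent to the final `N`-step of `P`, entering `(n r - c, 2 n)`
  refine ⟨valid_replicate_true_append_false_append (by omega) _ hR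
    fun t ht hE k hk => ?_, ?_⟩
  · have hN := hcross t (r + 1) ht (by simp [tail]) ⟨n - k, ?_⟩ hE
    · simp [tail] at hN
    rw [hk, pathPoint_append_of_le _ _ (by simp), pathPoint_length,
      pathPoint_replicate_true_append_false_length, hRsum]
    ext <;> simp <;> ring
  · rw [IsPathFrom, pathPoint_length]
    ext <;> simp [hRsum, stepVec] <;> ring

/-- case (2) of the bijection. If `P = E^a N E^b N R E^{r+1} N E^c` is a valid
path from `(0,0)` to `(nr,2n)` with `a + b + c < r`, then
`Q' = E^{a+b+c+1} N R'` (with `R' = R + (c+r+1,1)`), i.e. the path with steps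
`E^{a+b+c+1} N R` started at `(r,2)`, is a valid path from `(r,2)` to `(nr,2n)`. -/
theorem case_two_image_valid (r n : ℕ) (hr : 0 < r) (hn : 2 ≤ n)
    (a b c : ℕ) (R : List Bool) (steps : List Bool)
    (hform : steps = List.replicate a true ++ [false] ++ List.replicate b true ++ [false] ++
      R ++ List.replicate (r + 1) true ++ [false] ++ List.replicate c true)
    (habc : a + b + c < r)
    (hpath : IsPathFrom (0, 0) ((n * r : ℤ), (2 * n : ℤ)) steps)
    (hvalid : Valid r 2 (0, 0) steps) :
    Valid r 2 ((r : ℤ), 2) (List.replicate (a + b + c + 1) true ++ [false] ++ R) ∧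
    IsPathFrom ((r : ℤ), 2) ((n * r : ℤ), (2 * n : ℤ))
      (List.replicate (a + b + c + 1) true ++ [false] ++ R) :=
  case_two_image_valid_general r n a b c R steps hform habc hpath hvalid
end

section
/- Let s = 2 and n ≥ 2. The map sending P = E^a N E^b N Q E^c (with a+b+c = r, terminal E-run of length c) to the pair (E^a N E^b N E^c, Q + (c,0)), and sending P = E^a N E^b N R E^{r+1} N E^c (with a+b+c < r) to the pair (E^a N E^{r-a-c} N E^c, E^{a+b+c+1} N (R + (c+r+1,1))), is injective on the set of valid paths from (0,0) to (nr,2n). -/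
/-- The pair `(P', Q')` of step lists produced by the bijection `φ` from a valid path with
step list `steps`, in either of the two cases of the construction.  Here `E^a N E^b N` is the
prefix of the path up to its second `N`-step and `E^c` is the terminal run of `E`-steps. -/
def ImageOf (r : ℕ) (steps : List Bool) (out : List Bool × List Bool) : Prop :=
  (∃ a b c : ℕ, ∃ Q : List Bool,
      steps = List.replicate a true ++ [false] ++ List.replicate b true ++ [false] ++
        Q ++ List.replicate c true ∧
      a + b + c = r ∧ (Q = [] ∨ Q.getLast? = some false) ∧
      out = (List.replicate a true ++ [false] ++ List.replicate b true ++ [false] ++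
        List.replicate c true, Q)) ∨
  (∃ a b c : ℕ, ∃ R : List Bool,
      steps = List.replicate a true ++ [false] ++ List.replicate b true ++ [false] ++
        R ++ List.replicate (r + 1) true ++ [false] ++ List.replicate c true ∧
      a + b + c < r ∧
      out = (List.replicate a true ++ [false] ++ List.replicate (r - a - c) true ++ [false] ++
        List.replicate c true,
        List.replicate (a + b + c + 1) true ++ [false] ++ R))

open List

theorem List.replicate_append_cons_inj {α : Type*} {x y : α} (hxy : x ≠ y) :
    ∀ {a a' : ℕ} {L L' : List α},
      replicate a x ++ y :: L = replicate a' x ++ y :: L' ↔ a = a' ∧ L = L'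
  | 0, 0, _, _ => by simp
  | 0, _ + 1, _, _ => by simp [replicate_succ, hxy.symm]
  | _ + 1, 0, _, _ => by simp [replicate_succ, hxy]
  | a + 1, a' + 1, L, L' => by
    simp [replicate_succ, replicate_append_cons_inj hxy (a := a) (a' := a')]

theorem pathPoint_append_length (start : ℤ × ℤ) (xs ys : List Bool) :
    pathPoint start (xs ++ ys) xs.length = start + (xs.map stepVec).sum := by
  simp [pathPoint]

theorem Valid.sum_ne_of_east_north {r s : ℤ} {start : ℤ × ℤ} {pre mid tail : List Bool}
    (h : Valid r s start (pre ++ true :: (mid ++ false :: tail))) (ℓ : ℤ) :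
    ((mid ++ [false]).map stepVec).sum ≠ (ℓ * r, ℓ * s) := by
  intro hsum
  have hE : pathPoint start (pre ++ true :: (mid ++ false :: tail)) (pre.length + 1) =
      start + ((pre ++ [true]).map stepVec).sum := by
    simpa using pathPoint_append_length start (pre ++ [true]) (mid ++ false :: tail)
  have hN : pathPoint start (pre ++ true :: (mid ++ false :: tail))
      (pre.length + 1 + mid.length + 1) =
      start + ((pre ++ [true]).map stepVec).sum + ((mid ++ [false]).map stepVec).sum := by
    rw [show pre.length + 1 + mid.length + 1 = (pre ++ [true] ++ (mid ++ [false])).length by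
        simp; omega,
      show pre ++ true :: (mid ++ false :: tail) = pre ++ [true] ++ (mid ++ [false]) ++ tail by
        simp,
      pathPoint_append_length, map_append, sum_append, add_assoc]
  have hj := h pre.length (pre.length + 1 + mid.length) (by omega) (by simp) (by simp; omega)
    ⟨ℓ, by rw [hN, hE, ← hsum]; abel⟩ (by simp)
  rw [get_eq_getElem, getElem_of_append (l₁ := pre ++ true :: mid) (a := false) (l₂ := tail)
    (by simp) (by simp; omega)] at hj
  exact Bool.false_ne_true hj

theorem not_valid_of_two_rows {r b k : ℕ} {start : ℤ × ℤ} {pre tail : List Bool}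
    (hk : k ≤ r) (hbk : r < b + k) :
    ¬ Valid r 2 start (pre ++ replicate b true ++ false :: (replicate k true ++ false :: tail)) := by
  obtain ⟨m, rfl⟩ : ∃ m, b = m + (r - k + 1) := ⟨b + k - r - 1, by omega⟩
  intro h
  refine Valid.sum_ne_of_east_north (pre := pre ++ replicate m true)
    (mid := replicate (r - k) true ++ false :: replicate k true) (tail := tail)
    (by simpa [← replicate_append_replicate, replicate_succ] using h) 1 ?_
  simp [stepVec, Nat.cast_sub hk]

theorem not_valid_of_phi_collision {r a b c : ℕ} {start : ℤ × ℤ} {R : List Bool}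
    (hlt : a + b + c < r) :
    ¬ Valid r 2 start (replicate a true ++ [false] ++ replicate (r - a - c) true ++ [false] ++
      (replicate (a + b + c + 1) true ++ false :: R) ++ replicate c true) := by
  simpa using not_valid_of_two_rows (start := start) (pre := replicate a true ++ [false])
    (b := r - a - c) (k := a + b + c + 1) (tail := R ++ replicate c true) (by omega) (by omega)

theorem phi_injective_general (r : ℕ)
    (steps₁ steps₂ : List Bool) (out : List Bool × List Bool)
    (hvalid₁ : Valid r 2 (0, 0) steps₁)
    (hvalid₂ : Valid r 2 (0, 0) steps₂)
    (h₁ : ImageOf r steps₁ out) (h₂ : ImageOf r steps₂ out) :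
    steps₁ = steps₂ := by
  have inj := @replicate_append_cons_inj _ _ _ (by decide : true ≠ false)
  rcases h₁ with ⟨a, b, c, Q, rfl, -, -, rfl⟩ | ⟨a, b, c, R, rfl, hlt, rfl⟩ <;>
    rcases h₂ with ⟨a', b', c', Q', rfl, -, -, hout⟩ | ⟨a', b', c', R', rfl, hlt', hout⟩ <;>
    simp only [Prod.mk.injEq, append_assoc, cons_append, nil_append, inj, replicate_left_inj] at hout
  · obtain ⟨⟨rfl, rfl, rfl⟩, rfl⟩ := hout
    rfl
  · obtain ⟨⟨rfl, rfl, rfl⟩, rfl⟩ := hout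
    exact absurd hvalid₁ (not_valid_of_phi_collision hlt')
  · obtain ⟨⟨rfl, rfl, rfl⟩, rfl⟩ := hout
    exact absurd hvalid₂ (not_valid_of_phi_collision hlt)
  · obtain ⟨⟨rfl, -, rfl⟩, hsum, rfl⟩ := hout
    obtain rfl : b = b' := by omega
    rfl

/-- the map `φ` is injective on valid paths from `(0,0)` to `(nr,2n)`. -/
theorem phi_injective (r n : ℕ) (hr : 0 < r) (hn : 2 ≤ n)
    (steps₁ steps₂ : List Bool) (out : List Bool × List Bool)
    (hpath₁ : IsPathFrom (0, 0) ((n * r : ℤ), (2 * n : ℤ)) steps₁)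
    (hvalid₁ : Valid r 2 (0, 0) steps₁)
    (hpath₂ : IsPathFrom (0, 0) ((n * r : ℤ), (2 * n : ℤ)) steps₂)
    (hvalid₂ : Valid r 2 (0, 0) steps₂)
    (h₁ : ImageOf r steps₁ out) (h₂ : ImageOf r steps₂ out) :
    steps₁ = steps₂ :=
  phi_injective_general r steps₁ steps₂ out hvalid₁ hvalid₂ h₁ h₂
end
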